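/- For any n×n complex matrix M, the numerical range W(M) = {a†Ma : a ∈ ℂⁿ, a†a = 1} is a convex subset of ℂ (Toeplitz–Hausdorff theorem). -/

import Mathlib

open Matrix

namespace ToeplitzHausdorffAux
open Complex

lemma phase_lemma (p q : ℂ) :
    ∃ l : ℂ, (starRingEnd ℂ) l * l = 1 ∧ ((starRingEnd ℂ) l * p + l * q).im = 0 := by
  set z : ℂ := ((q - p).re : ℂ) - ((p + q).im : ℂ) * I with hz
  by_cases h : z = 0
  · refine ⟨1, by simp, ?_⟩
    have h1 := congrArg Complex.im h
    simp [hz] at h1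
    simp only [_root_.map_one, one_mul, Complex.add_im]
    linarith
  · have hr : (0:ℝ) < ‖z‖ := norm_pos_iff.mpr h
    have hrc : ((‖z‖ : ℝ) : ℂ) ≠ 0 := by exact_mod_cast hr.ne'
    refine ⟨z / ((‖z‖ : ℝ) : ℂ), ?_, ?_⟩
    · rw [← Complex.normSq_eq_conj_mul_self]
      have : Complex.normSq (z / ((‖z‖ : ℝ) : ℂ)) = 1 := by
        rw [map_div₀, Complex.normSq_eq_norm_sq, Complex.normSq_eq_norm_sq, Complex.norm_real, Real.norm_eq_abs,
          abs_of_pos hr, div_self (by positivity)]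
      rw [this, Complex.ofReal_one]
    · have hzre : z.re = (q - p).re := by simp [hz]
      have hzim : z.im = -((p + q).im) := by simp [hz]
      have key : ((starRingEnd ℂ) z * p + z * q).im = 0 := by
        simp [Complex.add_im, Complex.mul_im, hzre, hzim]
        ring
      have e : (starRingEnd ℂ) (z / ↑‖z‖) * p + (z / ↑‖z‖) * q
          = ((‖z‖⁻¹ : ℝ) : ℂ) * ((starRingEnd ℂ) z * p + z * q) := by
        rw [map_div₀, Complex.conj_ofReal, Complex.ofReal_inv]
        field_simp
      rw [e, Complex.mul_im]
      simp [key]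

lemma expand {n : ℕ} (N : Matrix (Fin n) (Fin n) ℂ) (a b : Fin n → ℂ) (c d : ℂ) :
    star (c • a + d • b) ⬝ᵥ (N *ᵥ (c • a + d • b)) =
      (starRingEnd ℂ) c * c * (star a ⬝ᵥ (N *ᵥ a)) + (starRingEnd ℂ) c * d * (star a ⬝ᵥ (N *ᵥ b))
      + (starRingEnd ℂ) d * c * (star b ⬝ᵥ (N *ᵥ a))
      + (starRingEnd ℂ) d * d * (star b ⬝ᵥ (N *ᵥ b)) := by
  simp [star_add, star_smul, mulVec_add, mulVec_smul, add_dotProduct, dotProduct_add,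
        smul_dotProduct, dotProduct_smul, smul_eq_mul]
  ring

lemma expand' {n : ℕ} (a b : Fin n → ℂ) (c d : ℂ) :
    star (c • a + d • b) ⬝ᵥ (c • a + d • b) =
      (starRingEnd ℂ) c * c * (star a ⬝ᵥ a) + (starRingEnd ℂ) c * d * (star a ⬝ᵥ b)
      + (starRingEnd ℂ) d * c * (star b ⬝ᵥ a) + (starRingEnd ℂ) d * d * (star b ⬝ᵥ b) := by
  have := expand (1 : Matrix (Fin n) (Fin n) ℂ) a b c d
  simpa [one_mulVec] using this

lemma dot_conj {n : ℕ} (a b : Fin n → ℂ) : star b ⬝ᵥ a = (starRingEnd ℂ) (star a ⬝ᵥ b) := by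
  simp [dotProduct, map_sum, mul_comm]

lemma dot_self_eq {n : ℕ} (x : Fin n → ℂ) :
    star x ⬝ᵥ x = ((∑ i, Complex.normSq (x i) : ℝ) : ℂ) := by
  push_cast
  simp [dotProduct, Complex.normSq_eq_conj_mul_self]

lemma dot_self_pos {n : ℕ} (x : Fin n → ℂ) (hx : x ≠ 0) :
    0 < ∑ i, Complex.normSq (x i) := by
  obtain ⟨i, hi⟩ := Function.ne_iff.mp hx
  exact Finset.sum_pos' (fun j _ => Complex.normSq_nonneg _)
    ⟨i, Finset.mem_univ i, Complex.normSq_pos.mpr hi⟩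

lemma smul_dot_smul {n : ℕ} (N : Matrix (Fin n) (Fin n) ℂ) (x : Fin n → ℂ) (c : ℂ) :
    star (c • x) ⬝ᵥ (N *ᵥ (c • x)) = (starRingEnd ℂ) c * c * (star x ⬝ᵥ (N *ᵥ x)) := by
  simp [star_smul, mulVec_smul, smul_dotProduct, dotProduct_smul, smul_eq_mul]
  ring

lemma smul_dot_smul' {n : ℕ} (x : Fin n → ℂ) (c : ℂ) :
    star (c • x) ⬝ᵥ (c • x) = (starRingEnd ℂ) c * c * (star x ⬝ᵥ x) := by
  have := smul_dot_smul (1 : Matrix (Fin n) (Fin n) ℂ) x c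
  simpa [one_mulVec] using this

set_option maxHeartbeats 1000000 in
lemma key {n : ℕ} (N : Matrix (Fin n) (Fin n) ℂ) (a b : Fin n → ℂ)
    (ha : star a ⬝ᵥ a = 1) (hb : star b ⬝ᵥ b = 1)
    (h0 : star a ⬝ᵥ (N *ᵥ a) = 0) (h1 : star b ⬝ᵥ (N *ᵥ b) = 1)
    (t : ℝ) (ht0 : 0 ≤ t) (ht1 : t ≤ 1) :
    ∃ x : Fin n → ℂ, star x ⬝ᵥ x = 1 ∧ star x ⬝ᵥ (N *ᵥ x) = (t : ℂ) := by
  obtain ⟨l, hl, him⟩ := phase_lemma (star a ⬝ᵥ (N *ᵥ b)) (star b ⬝ᵥ (N *ᵥ a))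
  have hlne : l ≠ 0 := fun h => by simp [h] at hl
  obtain ⟨W, hw⟩ : ∃ W : ℝ,
      (starRingEnd ℂ) l * (star a ⬝ᵥ (N *ᵥ b)) + l * (star b ⬝ᵥ (N *ᵥ a)) = (W : ℂ) :=
    ⟨_, Complex.ext rfl (by simpa using him)⟩
  obtain ⟨C, hw'⟩ : ∃ C : ℝ,
      (starRingEnd ℂ) l * (star a ⬝ᵥ b) + l * (star b ⬝ᵥ a) = (C : ℂ) := by
    refine ⟨2 * ((starRingEnd ℂ) l * (star a ⬝ᵥ b)).re, ?_⟩
    rw [dot_conj a b,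
      show l * (starRingEnd ℂ) (star a ⬝ᵥ b)
          = (starRingEnd ℂ) ((starRingEnd ℂ) l * (star a ⬝ᵥ b)) from by
        rw [_root_.map_mul, Complex.conj_conj],
      Complex.add_conj]
  set x : ℝ → (Fin n → ℂ) := fun s => (((1 - s : ℝ) : ℂ) * l) • a + ((s : ℝ) : ℂ) • b with hxdef
  set g : ℝ → ℝ := fun s => s ^ 2 + (1 - s) * s * W with hgdef
  set nf : ℝ → ℝ := fun s => (1 - s) ^ 2 + s ^ 2 + (1 - s) * s * C with hnfdef
  have hBx : ∀ s : ℝ, star (x s) ⬝ᵥ (N *ᵥ x s) = ((g s : ℝ) : ℂ) := by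
    intro s
    rw [hxdef]
    rw [expand N a b _ _, h0, h1]
    simp only [_root_.map_mul, Complex.conj_ofReal]
    rw [hgdef]
    push_cast
    linear_combination ((1:ℂ) - s) * s * hw
  have hNx : ∀ s : ℝ, star (x s) ⬝ᵥ (x s) = ((nf s : ℝ) : ℂ) := by
    intro s
    rw [hxdef]
    rw [expand' a b _ _, ha, hb]
    simp only [_root_.map_mul, Complex.conj_ofReal]
    rw [hnfdef]
    push_cast
    linear_combination ((1:ℂ) - s) ^ 2 * hl + ((1:ℂ) - s) * s * hw'
  have hxne : ∀ s : ℝ, x s ≠ 0 := by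
    intro s hxs
    have h2 : ((s : ℝ) : ℂ) • b = (-(((1 - s : ℝ) : ℂ) * l)) • a := by
      have h5 : (((1 - s : ℝ) : ℂ) * l) • a + ((s : ℝ) : ℂ) • b = 0 := hxs
      rw [add_comm, add_eq_zero_iff_eq_neg] at h5
      rw [h5, neg_smul]
    have h3 : (starRingEnd ℂ) ((s : ℝ) : ℂ) * ((s : ℝ) : ℂ) * 1 = 0 := by
      rw [← h1, ← smul_dot_smul, h2, smul_dot_smul, h0, mul_zero]
    have hs0 : s = 0 := by
      rw [Complex.conj_ofReal, mul_one] at h3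
      have : (s : ℂ) = 0 := by
        rcases mul_eq_zero.mp h3 with h | h <;> exact h
      exact_mod_cast this
    subst hs0
    have h6 : (((1 - 0 : ℝ) : ℂ) * l) • a + ((0 : ℝ) : ℂ) • b = 0 := hxs
    simp only [Complex.ofReal_zero, sub_zero, Complex.ofReal_one, one_mul, zero_smul,
      add_zero] at h6
    rcases smul_eq_zero.mp h6 with h | h
    · exact hlne h
    · rw [h] at ha
      simp at ha
  have hpos : ∀ s : ℝ, 0 < nf s := by
    intro s
    have h4 := hNx s
    rw [dot_self_eq] at h4
    have h5 : (∑ i, Complex.normSq (x s i)) = nf s := by exact_mod_cast h4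
    rw [← h5]
    exact dot_self_pos _ (hxne s)
  set f : ℝ → ℝ := fun s => g s / nf s with hfdef
  have hgc : Continuous g := by rw [hgdef]; fun_prop
  have hnc : Continuous nf := by rw [hnfdef]; fun_prop
  have hcont : ContinuousOn f (Set.Icc (0:ℝ) 1) :=
    (hgc.continuousOn.div hnc.continuousOn (fun s _ => (hpos s).ne'))
  have hf0 : f 0 = 0 := by simp [hfdef, hgdef, hnfdef]
  have hf1 : f 1 = 1 := by
    have : g 1 = 1 := by rw [hgdef]; norm_num
    have h2 : nf 1 = 1 := by rw [hnfdef]; norm_num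
    rw [hfdef]
    simp only
    rw [this, h2]
    norm_num
  have ht' : t ∈ Set.Icc (f 0) (f 1) := by rw [hf0, hf1]; exact ⟨ht0, ht1⟩
  obtain ⟨s, _, hfs⟩ := intermediate_value_Icc (by norm_num : (0:ℝ) ≤ 1) hcont ht'
  have hnfs := hpos s
  set r : ℝ := Real.sqrt (nf s) with hrdef
  have hr0 : 0 < r := Real.sqrt_pos.mpr hnfs
  have hrr : r * r = nf s := Real.mul_self_sqrt hnfs.le
  have hrc : ((r : ℝ) : ℂ) ≠ 0 := by exact_mod_cast hr0.ne'
  have hgs : g s = t * (r * r) := by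
    rw [hrr]
    exact (div_eq_iff hnfs.ne').mp hfs
  refine ⟨(((r : ℝ) : ℂ))⁻¹ • x s, ?_, ?_⟩
  · rw [smul_dot_smul', hNx s, ← Complex.ofReal_inv, Complex.conj_ofReal, ← hrr]
    push_cast
    field_simp
  · rw [smul_dot_smul, hBx s, ← Complex.ofReal_inv, Complex.conj_ofReal, hgs]
    push_cast
    field_simp

end ToeplitzHausdorffAux

/-- Toeplitz–Hausdorff theorem: the numerical range is convex. -/
theorem numericalRange_convex {n : ℕ} (M : Matrix (Fin n) (Fin n) ℂ) :
    Convex ℝ {z : ℂ | ∃ a : Fin n → ℂ, star a ⬝ᵥ a = 1 ∧ z = star a ⬝ᵥ (M *ᵥ a)} := by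
  rintro z₁ ⟨a, ha, rfl⟩ z₂ ⟨b, hb, rfl⟩ s t hs ht hst
  set w₁ := star a ⬝ᵥ (M *ᵥ a) with hw1
  set w₂ := star b ⬝ᵥ (M *ᵥ b) with hw2
  by_cases hz : w₁ = w₂
  · refine ⟨a, ha, ?_⟩
    rw [← hz, ← add_smul, hst, one_smul]
  · have hd : w₂ - w₁ ≠ 0 := sub_ne_zero.mpr (Ne.symm hz)
    set N : Matrix (Fin n) (Fin n) ℂ := (w₂ - w₁)⁻¹ • (M - w₁ • (1 : Matrix (Fin n) (Fin n) ℂ))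
      with hNdef
    have hNv : ∀ v : Fin n → ℂ, star v ⬝ᵥ v = 1 →
        star v ⬝ᵥ (N *ᵥ v) = (w₂ - w₁)⁻¹ * (star v ⬝ᵥ (M *ᵥ v) - w₁) := by
      intro v hv
      rw [hNdef, smul_mulVec, sub_mulVec, smul_mulVec, one_mulVec]
      rw [dotProduct_smul, dotProduct_sub, dotProduct_smul, hv]
      simp [smul_eq_mul]
    have h0 : star a ⬝ᵥ (N *ᵥ a) = 0 := by
      rw [hNv a ha, ← hw1, sub_self, mul_zero]
    have h1 : star b ⬝ᵥ (N *ᵥ b) = 1 := by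
      rw [hNv b hb, ← hw2, inv_mul_cancel₀ hd]
    have ht1 : t ≤ 1 := by linarith
    obtain ⟨x, hx, hxN⟩ := ToeplitzHausdorffAux.key N a b ha hb h0 h1 t ht ht1
    refine ⟨x, hx, ?_⟩
    have hxM : star x ⬝ᵥ (M *ᵥ x) = w₁ + (t : ℂ) * (w₂ - w₁) := by
      have := hNv x hx
      rw [hxN] at this
      field_simp [hd] at this
      linear_combination -this
    rw [hxM]
    have hs' : (s : ℝ) = 1 - t := by linarith
    rw [hs']
    push_cast [Complex.real_smul]
    ring
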